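/- arXiv:2312.09003 — 5 statements merged into one kernel-verified Lean document; each statement's English description precedes it below -/
import Mathlib

section
/- Let p be a prime and let n ≥ l ≥ 0 be integers. Let σ = [[a, b], [L, d]] be a matrix in SL₂(ℤ) and suppose that p^l divides L. Let α ∈ ℤ_p^× satisfy α ≡ 1 (mod p^{n−l} ℤ_p). Then, viewing σ as a matrix over ℚ_p, the conjugate σ · diag(α, 1) · σ⁻¹ equals [[a d α − b L, a b (1 − α)], [L d (α − 1), a d − b L α]]; all four of its entries lie in ℤ_p, its lower-left entry lies in p^n ℤ_p, and its determinant equals α, a unit of ℤ_p. In particular, σ · diag(α, 1) · σ⁻¹ belongs to K_p(p^n) := {g ∈ GL₂(ℤ_p) : the lower-left entry of g lies in p^n ℤ_p}. -/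
/-! Since `σ` has determinant one, `σ⁻¹` is its adjugate, so the conjugate of `diag(α, 1)` is
a polynomial expression in `a, b, L, d, α` that already makes sense over `ℤ_p`. Its determinant is
`α`, and its lower-left entry `L d (α - 1)` is divisible by `p ^ l * p ^ (n - l) = p ^ n`. -/

namespace Matrix

variable {R : Type*} [CommRing R]

def diagConj (a b c d t : R) : Matrix (Fin 2) (Fin 2) R :=
  !![a * d * t - b * c, a * b * (1 - t); c * d * (t - 1), a * d - b * c * t]

theorem inv_fin_two_of_det_eq_one {a b c d : R} (h : a * d - b * c = 1) :
    !![a, b; c, d]⁻¹ = !![d, -b; -c, a] := by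
  rw [inv_def, det_fin_two_of, h, Ring.inverse_one, one_smul, adjugate_fin_two_of]

theorem mul_diag_mul_inv_eq_diagConj {a b c d : R} (h : a * d - b * c = 1) (t : R) :
    !![a, b; c, d] * !![t, 0; 0, 1] * !![a, b; c, d]⁻¹ = diagConj a b c d t := by
  rw [inv_fin_two_of_det_eq_one h, diagConj]
  ext i j
  fin_cases i <;> fin_cases j <;> simp [mul_apply, Fin.sum_univ_two] <;> ring

theorem det_diagConj {a b c d : R} (h : a * d - b * c = 1) (t : R) :
    (diagConj a b c d t).det = t := by
  rw [diagConj, det_fin_two_of]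
  linear_combination t * (a * d - b * c + 1) * h

theorem map_diagConj {S : Type*} [CommRing S] (f : R →+* S) (a b c d t : R) :
    (diagConj a b c d t).map f = diagConj (f a) (f b) (f c) (f d) (f t) := by
  ext i j
  fin_cases i <;> fin_cases j <;> simp [diagConj]

end Matrix

theorem Ideal.mul_sub_one_mem_span_pow {R : Type*} [CommRing R] {x c t : R} {l n : ℕ}
    (hln : l ≤ n) (hc : x ^ l ∣ c) (ht : t - 1 ∈ Ideal.span {x ^ (n - l)}) (d : R) :
    c * d * (t - 1) ∈ Ideal.span {x ^ n} := by
  rw [Ideal.mem_span_singleton, ← pow_mul_pow_sub x hln]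
  exact mul_dvd_mul (hc.mul_right d) (Ideal.mem_span_singleton.mp ht)

open Matrix in
/-- Let `p` be a prime, `n ≥ l ≥ 0` integers,
`σ = [[a, b], [L, d]] ∈ SL₂(ℤ)` with `p^l ∣ L`, and let `α ∈ ℤ_p^×` satisfy
`α ≡ 1 (mod p^(n-l) ℤ_p)`.  Viewing `σ` as a matrix over `ℚ_p`, the conjugate
`σ · diag(α,1) · σ⁻¹` equals `[[a d α − b L, a b (1 − α)], [L d (α − 1), a d − b L α]]`;
all of its entries lie in `ℤ_p`, its lower-left entry lies in `p^n ℤ_p`, and its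
determinant equals `α`, a unit of `ℤ_p`.  In particular it belongs to
`K_p(p^n) = {g ∈ GL₂(ℤ_p) : g 1 0 ∈ p^n ℤ_p}`. -/
theorem fourier_coeff_cusp_local_invariance
    (p : ℕ) [Fact p.Prime] (n l : ℕ) (hln : l ≤ n)
    (a b L d : ℤ) (hσ : a * d - b * L = 1) (hL : (p : ℤ) ^ l ∣ L)
    (α : ℤ_[p]ˣ)
    (hα : ((α : ℤ_[p]) - 1) ∈ Ideal.span {(p : ℤ_[p]) ^ (n - l)}) :
    let σ : Matrix (Fin 2) (Fin 2) ℚ_[p] :=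
      !![(a : ℚ_[p]), (b : ℚ_[p]); (L : ℚ_[p]), (d : ℚ_[p])]
    let A : ℚ_[p] := ((α : ℤ_[p]) : ℚ_[p])
    let M : Matrix (Fin 2) (Fin 2) ℚ_[p] :=
      !![(a : ℚ_[p]) * d * A - b * L, (a : ℚ_[p]) * b * (1 - A);
         (L : ℚ_[p]) * d * (A - 1), (a : ℚ_[p]) * d - b * L * A]
    σ * !![A, 0; 0, 1] * σ⁻¹ = M ∧
    (∀ i j : Fin 2, ‖M i j‖ ≤ 1) ∧
    ‖M 1 0‖ ≤ (p : ℝ) ^ (-(n : ℤ)) ∧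
    M.det = A ∧ IsUnit (α : ℤ_[p]) ∧
    (∃ G : Matrix (Fin 2) (Fin 2) ℤ_[p],
      IsUnit G.det ∧ G 1 0 ∈ Ideal.span {(p : ℤ_[p]) ^ n} ∧
      G.map (fun y : ℤ_[p] => (y : ℚ_[p])) = M) := by
  intro σ A M
  set G := diagConj (a : ℤ_[p]) b L d α
  have hσZ : (a : ℤ_[p]) * d - b * L = 1 := mod_cast congrArg (Int.cast : ℤ → ℤ_[p]) hσ
  have hσQ : (a : ℚ_[p]) * d - b * L = 1 := mod_cast congrArg (Int.cast : ℤ → ℚ_[p]) hσ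
  have hGM : G.map PadicInt.Coe.ringHom = M := by simp [G, M, A, map_diagConj]; rfl
  have hG10 : G 1 0 ∈ Ideal.span {(p : ℤ_[p]) ^ n} :=
    Ideal.mul_sub_one_mem_span_pow hln (by simpa using map_dvd (Int.castRingHom ℤ_[p]) hL) hα d
  have hM : ∀ i j, M i j = G i j := fun i j => by rw [← hGM]; rfl
  refine ⟨mul_diag_mul_inv_eq_diagConj hσQ A, fun i j => ?_, ?_, det_diagConj hσQ A, α.isUnit,
    G, ?_, hG10, hGM⟩
  · rw [hM, PadicInt.padic_norm_e_of_padicInt]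
    exact PadicInt.norm_le_one _
  · rw [hM, PadicInt.padic_norm_e_of_padicInt]
    exact (PadicInt.norm_le_pow_iff_mem_span_pow _ n).mpr hG10
  · rw [det_diagConj hσZ]
    exact α.isUnit
end

section
/- Let O be a discrete valuation ring with fraction field K and uniformizer π (so the maximal ideal of O is πO). Let A = [[a', b'], [c', d']] be a 2×2 matrix over O whose determinant ε := a'd' − b'c' is a unit of O, let n ≥ 0 be an integer, and let x ∈ K. Then the conjugate A · [[1, x], [0, 1]] · A⁻¹, which equals the identity matrix plus x·ε⁻¹·[[−a'c', (a')²], [−(c')², a'c']], has all four entries in O and its lower-left entry in π^n O if and only if (a')² · x ∈ O and (c')² · x ∈ π^n O. -/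
/-!
Conjugating `[[1, x], [0, 1]]` by `A` gives `1 + x ε⁻¹ N` with `N = [[-a'c', a'²], [-c'², a'c']]`.
As `ε` is a unit, the off-diagonal conditions say exactly `a'² x ∈ O` and `c'² x ∈ πⁿ O`. The
diagonal entries `1 ∓ x ε⁻¹ a'c'` then come for free: `(a'c' x)² = (a'² x)(c'² x) ∈ O`, and a
DVR is integrally closed.
-/

theorem Matrix.mul_unipotent_mul_inv_fin_two {K : Type*} [Field K] {a b c d : K}
    (h : a * d - b * c ≠ 0) (x : K) :
    !![a, b; c, d] * !![1, x; 0, 1] * (!![a, b; c, d])⁻¹ =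
      1 + (x * (a * d - b * c)⁻¹) • !![-(a * c), a ^ 2; -(c ^ 2), a * c] := by
  rw [Matrix.inv_def, Matrix.det_fin_two_of, Matrix.adjugate_fin_two_of, Ring.inverse_eq_inv']
  -- an opaque `Δ` keeps `simp` from reshaping the determinant, so `field_simp` still sees `h`
  set Δ := a * d - b * c
  ext i j
  fin_cases i <;> fin_cases j <;>
    · simp [Matrix.mul_apply, Fin.sum_univ_two]
      field_simp
      ring

theorem exists_map_mul_eq_unit_mul_iff {R S : Type*} [CommSemiring R] [CommSemiring S]
    (f : R →+* S) (r : R) (u : Rˣ) (z : S) :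
    (∃ y, f (r * y) = f u * z) ↔ ∃ y, f (r * y) = z := by
  constructor
  · rintro ⟨y, hy⟩
    refine ⟨↑u⁻¹ * y, ?_⟩
    rw [mul_left_comm, map_mul, hy, ← mul_assoc, ← map_mul, Units.inv_mul, map_one, one_mul]
  · rintro ⟨y, rfl⟩
    exact ⟨u * y, by rw [mul_left_comm, map_mul]⟩

theorem exists_map_eq_unit_mul_iff {R S : Type*} [CommSemiring R] [CommSemiring S]
    (f : R →+* S) (u : Rˣ) (z : S) :
    (∃ y, f y = f u * z) ↔ ∃ y, f y = z := by
  simpa only [one_mul] using exists_map_mul_eq_unit_mul_iff f 1 u z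

theorem IsIntegrallyClosed.exists_algebraMap_eq_mul_of_sq_mul {R K : Type*} [CommRing R]
    [IsIntegrallyClosed R] [Field K] [Algebra R K] [IsFractionRing R K] {a c x : K}
    (ha : ∃ p : R, algebraMap R K p = a ^ 2 * x) (hc : ∃ q : R, algebraMap R K q = c ^ 2 * x) :
    ∃ w : R, algebraMap R K w = a * c * x := by
  obtain ⟨p, hp⟩ := ha
  obtain ⟨q, hq⟩ := hc
  refine exists_algebraMap_eq_of_isIntegral_pow two_pos ?_
  rw [show (a * c * x) ^ 2 = algebraMap R K (p * q) by rw [map_mul, hp, hq]; ring]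
  exact isIntegral_algebraMap

theorem unipotent_conjugate_integrality_criterion_general
    (O K : Type*) [CommRing O] [IsDomain O] [IsDiscreteValuationRing O]
    [Field K] [Algebra O K] [IsFractionRing O K]
    (π : O)
    (a' b' c' d' : O) (hε : IsUnit (a' * d' - b' * c'))
    (n : ℕ) (x : K) :
    let f : O →+* K := algebraMap O K
    let A : Matrix (Fin 2) (Fin 2) K := !![f a', f b'; f c', f d']
    let M : Matrix (Fin 2) (Fin 2) K := A * !![1, x; 0, 1] * A⁻¹
    (M = 1 + (x * (f (a' * d' - b' * c'))⁻¹) •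
        !![-(f a' * f c'), (f a') ^ 2; -((f c') ^ 2), f a' * f c']) ∧
    (((∀ i j : Fin 2, ∃ y : O, f y = M i j) ∧ (∃ y : O, f (π ^ n * y) = M 1 0))
      ↔ ((∃ y : O, f y = (f a') ^ 2 * x) ∧ (∃ y : O, f (π ^ n * y) = (f c') ^ 2 * x))) := by
  intro f A M
  have hdet : f (a' * d' - b' * c') = f a' * f d' - f b' * f c' := by simp [f]
  have hM : M = _ := Matrix.mul_unipotent_mul_inv_fin_two (hdet ▸ (hε.map f).ne_zero) x
  rw [← hdet] at hM
  refine ⟨hM, ?_⟩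
  set u := hε.unit
  have hM' : M = 1 + (x * f ↑u⁻¹) • !![-(f a' * f c'), (f a') ^ 2; -((f c') ^ 2), f a' * f c'] := by
    rw [hM, map_units_inv, hε.unit_spec]
  have h00 : M 0 0 = 1 - f ↑u⁻¹ * (f a' * f c' * x) := by simp [hM']; ring
  have h01 : M 0 1 = f ↑u⁻¹ * (f a' ^ 2 * x) := by simp [hM']; ring
  have h10 : M 1 0 = f ↑(-u⁻¹) * (f c' ^ 2 * x) := by simp [hM']; ring
  have h11 : M 1 1 = 1 + f ↑u⁻¹ * (f a' * f c' * x) := by simp [hM']; ring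
  rw [h10, exists_map_mul_eq_unit_mul_iff]
  refine ⟨fun ⟨hint, hlow⟩ ↦ ⟨?_, hlow⟩, fun ⟨⟨ya, hya⟩, hlow⟩ ↦ ⟨?_, hlow⟩⟩
  · simpa only [h01, exists_map_eq_unit_mul_iff] using hint 0 1
  obtain ⟨yc, hyc⟩ := hlow
  obtain ⟨w, hw⟩ := IsIntegrallyClosed.exists_algebraMap_eq_mul_of_sq_mul ⟨ya, hya⟩ ⟨_, hyc⟩
  simp only [Fin.forall_fin_two]
  refine ⟨⟨⟨1 - ↑u⁻¹ * w, ?_⟩, ↑u⁻¹ * ya, ?_⟩, ⟨↑(-u⁻¹) * (π ^ n * yc), ?_⟩, 1 + ↑u⁻¹ * w, ?_⟩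
  · rw [h00, map_sub, map_one, map_mul, hw]
  · rw [h01, map_mul, hya]
  · rw [h10, map_mul, hyc]
  · rw [h11, map_add, map_one, map_mul, hw]

/-- Let `O` be a DVR with fraction field `K` and uniformizer `π`.
Let `A = [[a', b'], [c', d']]` be a matrix over `O` with unit determinant
`ε = a'd' − b'c'`, let `n ≥ 0` and `x ∈ K`.  Then
`A · [[1, x], [0, 1]] · A⁻¹ = 1 + x·ε⁻¹·[[−a'c', a'²], [−c'², a'c']]`,
and this conjugate has all entries in `O` with lower-left entry in `π^n O`
if and only if `a'² x ∈ O` and `c'² x ∈ π^n O`. -/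
theorem unipotent_conjugate_integrality_criterion
    (O K : Type*) [CommRing O] [IsDomain O] [IsDiscreteValuationRing O]
    [Field K] [Algebra O K] [IsFractionRing O K]
    (π : O) (hπ : Irreducible π)
    (a' b' c' d' : O) (hε : IsUnit (a' * d' - b' * c'))
    (n : ℕ) (x : K) :
    let f : O →+* K := algebraMap O K
    let A : Matrix (Fin 2) (Fin 2) K := !![f a', f b'; f c', f d']
    let M : Matrix (Fin 2) (Fin 2) K := A * !![1, x; 0, 1] * A⁻¹
    (M = 1 + (x * (f (a' * d' - b' * c'))⁻¹) •
        !![-(f a' * f c'), (f a') ^ 2; -((f c') ^ 2), f a' * f c']) ∧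
    (((∀ i j : Fin 2, ∃ y : O, f y = M i j) ∧ (∃ y : O, f (π ^ n * y) = M 1 0))
      ↔ ((∃ y : O, f y = (f a') ^ 2 * x) ∧ (∃ y : O, f (π ^ n * y) = (f c') ^ 2 * x))) :=
  unipotent_conjugate_integrality_criterion_general O K π a' b' c' d' hε n x
end

section
/- Let O be a discrete valuation ring with fraction field K and uniformizer π (so the maximal ideal of O is πO). Let a', b', c', d' ∈ O with ε := a'd' − b'c' a unit of O, let d ≥ 0 and n ≥ 0 be integers, and let α be a unit of O satisfying c'd'(α − 1) ∈ π^n O. Set M = [[a', b'·π^{−d}], [c'·π^{d}, d']], a matrix over K. Then M · diag(α, 1) · M⁻¹ = ε⁻¹ · [[a'd'α − b'c', a'b'(1 − α)·π^{−d}], [c'd'(α − 1)·π^{d}, a'd' − b'c'α]]; its two diagonal entries lie in O, its upper-right entry lies in π^{−d} O, its lower-left entry lies in π^{n+d} O, and its determinant equals α, a unit of O. -/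
/-!
Since `M⁻¹ = (det M)⁻¹ • adj M`, the conjugate `M · diag(α, 1) · M⁻¹` is `(det M)⁻¹` times the
polynomial matrix `M · diag(α, 1) · adj M`. Scaling the off-diagonal entries of `M` by `π^(-d)` and
`π^d` leaves `bc` and `det M = ε` unchanged and scales the off-diagonal entries of the conjugate in
the same way. As `ε` is a unit of `O`, the entries are integral up to these powers of `π`, and the
hypothesis on `c'd'(α − 1)` supplies the extra `π^n` in the lower-left corner.
-/

namespace Matrix

theorem fin_two_mul_diag_mul_adjugate {R : Type*} [CommRing R] (a b c d α : R) :
    !![a, b; c, d] * !![α, 0; 0, 1] * adjugate !![a, b; c, d] =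
      !![a * d * α - b * c, a * b * (1 - α); c * d * (α - 1), a * d - b * c * α] := by
  rw [adjugate_fin_two_of]
  ext i j
  fin_cases i <;> fin_cases j <;> simp [mul_apply] <;> ring

/-- When `det M = 0`, Mathlib's `M⁻¹` is `0` and both sides vanish. -/
theorem fin_two_mul_diag_mul_inv {K : Type*} [Field K] (a b c d α : K) :
    !![a, b; c, d] * !![α, 0; 0, 1] * !![a, b; c, d]⁻¹ =
      (a * d - b * c)⁻¹ •
        !![a * d * α - b * c, a * b * (1 - α); c * d * (α - 1), a * d - b * c * α] := by
  rw [inv_def, Matrix.mul_smul, fin_two_mul_diag_mul_adjugate, det_fin_two_of, Ring.inverse_eq_inv']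

variable {K : Type*} [Field K] {s t : K}

theorem det_fin_two_rescaled (a b c d : K) (hst : s * t = 1) :
    !![a, b * s; c * t, d].det = a * d - b * c := by
  rw [det_fin_two_of, mul_mul_mul_comm, hst, mul_one]

theorem fin_two_rescaled_mul_diag_mul_inv (a b c d α : K) (hst : s * t = 1) :
    !![a, b * s; c * t, d] * !![α, 0; 0, 1] * !![a, b * s; c * t, d]⁻¹ =
      (a * d - b * c)⁻¹ •
        !![a * d * α - b * c, a * b * (1 - α) * s; c * d * (α - 1) * t, a * d - b * c * α] := by
  have hbc : b * s * (c * t) = b * c := by rw [mul_mul_mul_comm, hst, mul_one]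
  rw [fin_two_mul_diag_mul_inv, hbc]
  congr 2; ring_nf

end Matrix

theorem hilbert_cusp_local_congruence_general
    (O K : Type*) [CommRing O]
    [Field K] [Algebra O K] [IsFractionRing O K]
    (π : O) (hπ : Irreducible π)
    (a' b' c' d' : O) (hε : IsUnit (a' * d' - b' * c'))
    (d n : ℕ) (α : Oˣ)
    (hα : ∃ y : O, c' * d' * ((α : O) - 1) = π ^ n * y) :
    let f : O →+* K := algebraMap O K
    let M : Matrix (Fin 2) (Fin 2) K :=
      !![f a', f b' * (f π) ^ (-(d : ℤ)); f c' * (f π) ^ (d : ℤ), f d']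
    let N : Matrix (Fin 2) (Fin 2) K := M * !![f (α : O), 0; 0, 1] * M⁻¹
    (N = (f (a' * d' - b' * c'))⁻¹ •
        !![f (a' * d' * (α : O) - b' * c'), f (a' * b' * (1 - (α : O))) * (f π) ^ (-(d : ℤ));
           f (c' * d' * ((α : O) - 1)) * (f π) ^ (d : ℤ), f (a' * d' - b' * c' * (α : O))]) ∧
    (∃ y : O, f y = N 0 0) ∧ (∃ y : O, f y = N 1 1) ∧
    (∃ y : O, f y * (f π) ^ (-(d : ℤ)) = N 0 1) ∧
    (∃ y : O, f (π ^ (n + d) * y) = N 1 0) ∧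
    N.det = f (α : O) ∧ IsUnit (α : O) := by
  intro f M N
  have hπ0 : f π ≠ 0 := (map_ne_zero_iff f (IsFractionRing.injective O K)).mpr hπ.ne_zero
  have hst := zpow_neg_mul_zpow_self (d : ℤ) hπ0
  have hN : N = (f (a' * d' - b' * c'))⁻¹ •
        !![f (a' * d' * (α : O) - b' * c'), f (a' * b' * (1 - (α : O))) * (f π) ^ (-(d : ℤ));
           f (c' * d' * ((α : O) - 1)) * (f π) ^ (d : ℤ), f (a' * d' - b' * c' * (α : O))] := by
    simp only [map_sub, map_mul, map_one]
    exact Matrix.fin_two_rescaled_mul_diag_mul_inv _ _ _ _ _ hst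
  have hεinv : (f (a' * d' - b' * c'))⁻¹ = f ↑hε.unit⁻¹ := by
    rw [map_units_inv, IsUnit.unit_spec]
  obtain ⟨y, hy⟩ := hα
  have hdetM : IsUnit M.det := by
    rw [Matrix.det_fin_two_rescaled _ _ _ _ hst]
    simpa only [map_sub, map_mul] using hε.map f
  refine ⟨hN, ⟨↑hε.unit⁻¹ * (a' * d' * α - b' * c'), ?_⟩,
    ⟨↑hε.unit⁻¹ * (a' * d' - b' * c' * α), ?_⟩, ⟨↑hε.unit⁻¹ * (a' * b' * (1 - α)), ?_⟩,
    ⟨↑hε.unit⁻¹ * y, ?_⟩, ?_, α.isUnit⟩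
  · rw [hN, hεinv]; simp
  · rw [hN, hεinv]; simp
  · rw [hN, hεinv]; simp [mul_assoc]
  · rw [hN, hεinv, hy]; simp [pow_add, mul_comm, mul_assoc, mul_left_comm]
  · rw [Matrix.det_conj ((M.isUnit_iff_isUnit_det).mpr hdetM), Matrix.det_fin_two_of]; ring

/-- Let `O` be a DVR with fraction field `K` and uniformizer `π`.
Let `a', b', c', d' ∈ O` with `ε = a'd' − b'c'` a unit, `d, n ≥ 0`, and let `α ∈ O^×`
satisfy `c'd'(α − 1) ∈ π^n O`.  Set `M = [[a', b'π^(−d)], [c'π^d, d']]` over `K`.  Then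
`M · diag(α,1) · M⁻¹ = ε⁻¹·[[a'd'α − b'c', a'b'(1 − α)π^(−d)], [c'd'(α − 1)π^d, a'd' − b'c'α]]`,
its diagonal entries lie in `O`, its upper-right entry lies in `π^(−d) O`, its lower-left
entry lies in `π^(n+d) O`, and its determinant equals `α`, a unit of `O`. -/
theorem hilbert_cusp_local_congruence
    (O K : Type*) [CommRing O] [IsDomain O] [IsDiscreteValuationRing O]
    [Field K] [Algebra O K] [IsFractionRing O K]
    (π : O) (hπ : Irreducible π)
    (a' b' c' d' : O) (hε : IsUnit (a' * d' - b' * c'))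
    (d n : ℕ) (α : Oˣ)
    (hα : ∃ y : O, c' * d' * ((α : O) - 1) = π ^ n * y) :
    let f : O →+* K := algebraMap O K
    let M : Matrix (Fin 2) (Fin 2) K :=
      !![f a', f b' * (f π) ^ (-(d : ℤ)); f c' * (f π) ^ (d : ℤ), f d']
    let N : Matrix (Fin 2) (Fin 2) K := M * !![f (α : O), 0; 0, 1] * M⁻¹
    (N = (f (a' * d' - b' * c'))⁻¹ •
        !![f (a' * d' * (α : O) - b' * c'), f (a' * b' * (1 - (α : O))) * (f π) ^ (-(d : ℤ));
           f (c' * d' * ((α : O) - 1)) * (f π) ^ (d : ℤ), f (a' * d' - b' * c' * (α : O))]) ∧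
    (∃ y : O, f y = N 0 0) ∧ (∃ y : O, f y = N 1 1) ∧
    (∃ y : O, f y * (f π) ^ (-(d : ℤ)) = N 0 1) ∧
    (∃ y : O, f (π ^ (n + d) * y) = N 1 0) ∧
    N.det = f (α : O) ∧ IsUnit (α : O) :=
  hilbert_cusp_local_congruence_general O K π hπ a' b' c' d' hε d n α hα
end

section
/- For every adele x in the adele ring 𝔸_ℚ of ℚ there exists a unique rational number γ such that the component of x − γ at the archimedean place lies in the half-open interval [0, 1) and, for every prime p, the component of x − γ at p lies in ℤ_p. -/
/-!
A finite adele is integral outside a finite set `S` of places. Approximating its components at `S`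
by elements of `K` (density of `K` in `K_v`) and gluing these approximations by strong
approximation gives `q ∈ K` with `x - q` integral at every place; two such `q` differ by an element
of `R`, since an element of `K` integral at every place lies in `R`. Over `ℚ` the remaining freedom
`q ↦ q + n`, `n ∈ ℤ`, is removed by asking the real component of `x - q` to lie in `[0, 1)`, which
forces `n = ⌊x_∞ - q⌋`.
-/

open IsDedekindDomain

section

variable {R : Type*} [CommRing R] [IsDedekindDomain R] {K : Type*} [Field K] [Algebra R K]
  [IsFractionRing R K]

namespace IsDedekindDomain.HeightOneSpectrum

theorem valuation_div_le_one (v : HeightOneSpectrum R) {r d : R}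
    (h : v.intValuation r ≤ v.intValuation d) :
    v.valuation K (algebraMap R K r / algebraMap R K d) ≤ 1 := by
  rw [map_div₀, valuation_of_algebraMap, valuation_of_algebraMap]
  exact div_le_one_of_le₀ h zero_le

/- Strong approximation at the finite places: write `y v = a v / d` with `a v, d ∈ R` and use the
Chinese remainder theorem to find `r ≡ a v (mod v ^ ord_v d)` for `v ∈ s` and `r ≡ 0` at the other
primes dividing `d`; then `q = r / d`. -/
theorem exists_valuation_sub_le_one (s : Finset (HeightOneSpectrum R))
    (y : HeightOneSpectrum R → K) :
    ∃ q : K, (∀ v ∈ s, v.valuation K (q - y v) ≤ 1) ∧ ∀ v ∉ s, v.valuation K q ≤ 1 := by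
  classical
  obtain ⟨⟨d, hd⟩, hdy⟩ := IsLocalization.exist_integer_multiples (nonZeroDivisors R) s y
  choose! a ha using hdy
  have hd0 : d ≠ 0 := nonZeroDivisors.ne_zero hd
  have hspan : Ideal.span {d} ≠ 0 := by simpa [Ideal.span_singleton_eq_bot] using hd0
  choose e he using fun v : HeightOneSpectrum R =>
    (⟨_, v.intValuation_if_neg hd0⟩ : ∃ n : ℕ, v.intValuation d = WithZero.exp (-(n : ℤ)))
  let t := s ∪ (Ideal.finite_factors hspan).toFinset
  obtain ⟨r, hr⟩ := exists_forall_sub_mem_ideal (s := t) (fun v => v.asIdeal) e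
    (fun v _ => v.prime) (fun v _ w _ hvw h => hvw (HeightOneSpectrum.ext h))
    (fun v => if (v : HeightOneSpectrum R) ∈ s then a v else 0)
  have hclose : ∀ v ∈ t, v.intValuation (r - if v ∈ s then a v else 0) ≤ v.intValuation d :=
    fun v hv => by rw [he, intValuation_le_pow_iff_mem]; exact hr v hv
  refine ⟨algebraMap R K r / algebraMap R K d, fun v hv => ?_, fun v hv => ?_⟩
  · have hsub : algebraMap R K r / algebraMap R K d - y v =
        algebraMap R K (r - a v) / algebraMap R K d := by
      have hdK : algebraMap R K d ≠ 0 := IsFractionRing.to_map_ne_zero_of_mem_nonZeroDivisors hd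
      rw [map_sub, ha v hv, Algebra.smul_def]
      field_simp
    rw [hsub]
    apply valuation_div_le_one
    simpa [hv] using hclose v (Finset.mem_union_left _ hv)
  · apply valuation_div_le_one
    by_cases hvt : v ∈ t
    · simpa [hv] using hclose v hvt
    · have hdv : v.intValuation d = 1 := by
        rw [intValuation_eq_one_iff, ← Ideal.dvd_span_singleton]
        simpa [t, hv] using hvt
      exact hdv ▸ v.intValuation_le_one r

theorem algebraMap_mem_adicCompletionIntegers_iff (v : HeightOneSpectrum R) (q : K) :
    algebraMap K (v.adicCompletion K) q ∈ v.adicCompletionIntegers K ↔ v.valuation K q ≤ 1 := by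
  rw [mem_adicCompletionIntegers, ← valuedAdicCompletion_eq_valuation']
  rfl

theorem exists_sub_mem_adicCompletionIntegers (v : HeightOneSpectrum R) (y : v.adicCompletion K) :
    ∃ q : K, y - algebraMap K (v.adicCompletion K) q ∈ v.adicCompletionIntegers K := by
  have hU : {z | Valued.v (z - y) < 1} ∈ nhds y :=
    Valued.mem_nhds.mpr ⟨1, fun z hz => by simpa using hz⟩
  obtain ⟨_, hz, q, rfl⟩ := mem_closure_iff_nhds.mp (denseRange_algebraMap K v y) _ hU
  exact ⟨q, by rw [mem_adicCompletionIntegers, Valuation.map_sub_swap]; exact hz.le⟩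

end IsDedekindDomain.HeightOneSpectrum

namespace IsDedekindDomain.FiniteAdeleRing

open HeightOneSpectrum

theorem sub_algebraMap_apply (x : FiniteAdeleRing R K) (q : K) (v : HeightOneSpectrum R) :
    (x - algebraMap K (FiniteAdeleRing R K) q) v = x v - algebraMap K (v.adicCompletion K) q :=
  rfl

theorem exists_sub_algebraMap_mem_adicCompletionIntegers (x : FiniteAdeleRing R K) :
    ∃ q : K, ∀ v : HeightOneSpectrum R,
      (x - algebraMap K (FiniteAdeleRing R K) q) v ∈ v.adicCompletionIntegers K := by
  have hS := Filter.eventually_cofinite.mp x.2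
  choose y hy using fun v => exists_sub_mem_adicCompletionIntegers v (x v)
  obtain ⟨q, hq_near, hq_int⟩ := exists_valuation_sub_le_one hS.toFinset y
  refine ⟨q, fun v => ?_⟩
  rw [sub_algebraMap_apply]
  by_cases hv : v ∈ hS.toFinset
  · have hqy := (algebraMap_mem_adicCompletionIntegers_iff v _).mpr (hq_near v hv)
    rw [map_sub] at hqy
    simpa using sub_mem (hy v) hqy
  · have hxv : x v ∈ v.adicCompletionIntegers K := by
      by_contra h
      exact hv (hS.mem_toFinset.mpr h)
    exact sub_mem hxv ((algebraMap_mem_adicCompletionIntegers_iff v q).mpr (hq_int v hv))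

theorem sub_mem_range_of_sub_algebraMap_mem_adicCompletionIntegers (x : FiniteAdeleRing R K)
    {q₁ q₂ : K}
    (h₁ : ∀ v, (x - algebraMap K (FiniteAdeleRing R K) q₁) v ∈ v.adicCompletionIntegers K)
    (h₂ : ∀ v, (x - algebraMap K (FiniteAdeleRing R K) q₂) v ∈ v.adicCompletionIntegers K) :
    q₁ - q₂ ∈ (algebraMap R K).range := by
  refine mem_integers_of_valuation_le_one K _ fun v => ?_
  rw [← algebraMap_mem_adicCompletionIntegers_iff]
  have h := sub_mem (h₂ v) (h₁ v)
  rwa [sub_algebraMap_apply, sub_algebraMap_apply, sub_sub_sub_cancel_left, ← map_sub] at h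

end IsDedekindDomain.FiniteAdeleRing

end

open IsDedekindDomain.HeightOneSpectrum IsDedekindDomain.FiniteAdeleRing in
/-- For every adele `x` of `ℚ` (the adele ring being
`ℝ × 𝔸_{ℚ,f}` with `𝔸_{ℚ,f}` the finite adele ring of `ℤ ⊂ ℚ`) there exists a
unique rational number `γ` such that the archimedean component of `x − γ` lies
in `[0, 1)` and, for every finite place `v`, the component of `x − γ` at `v`
lies in the ring of integers `ℤ_v`. -/
theorem adele_unique_representative (x : ℝ × FiniteAdeleRing ℤ ℚ) :
    ∃! γ : ℚ,
      (x.1 - (γ : ℝ)) ∈ Set.Ico (0 : ℝ) 1 ∧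
      ∀ v : HeightOneSpectrum ℤ,
        (x.2 - algebraMap ℚ (FiniteAdeleRing ℤ ℚ) γ) v ∈ v.adicCompletionIntegers ℚ := by
  obtain ⟨q, hq⟩ := exists_sub_algebraMap_mem_adicCompletionIntegers x.2
  have hq_add_int (n : ℤ) (v : HeightOneSpectrum ℤ) :
      (x.2 - algebraMap ℚ (FiniteAdeleRing ℤ ℚ) (q + n)) v ∈ v.adicCompletionIntegers ℚ := by
    have hn : algebraMap ℚ (v.adicCompletion ℚ) n ∈ v.adicCompletionIntegers ℚ :=
      (algebraMap_mem_adicCompletionIntegers_iff v _).mpr (by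
        simpa only [eq_intCast] using v.valuation_le_one (K := ℚ) n)
    have h := sub_mem (hq v) hn
    rwa [sub_algebraMap_apply, sub_sub, ← map_add, ← sub_algebraMap_apply] at h
  refine ⟨q + ⌊x.1 - q⌋, ⟨?_, hq_add_int _⟩, fun γ ⟨hγ, hγv⟩ => ?_⟩
  · have hfract : x.1 - ((q + ⌊x.1 - q⌋ : ℚ) : ℝ) = Int.fract (x.1 - q) := by
      push_cast
      rw [Int.fract]
      ring
    rw [hfract]
    exact ⟨Int.fract_nonneg _, Int.fract_lt_one _⟩
  · obtain ⟨n, hn⟩ := sub_mem_range_of_sub_algebraMap_mem_adicCompletionIntegers x.2 hγv hq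
    obtain rfl : γ = q + n := by rw [← eq_intCast (algebraMap ℤ ℚ), hn]; ring
    have hfloor : ⌊x.1 - q⌋ = n := by
      rw [Int.floor_eq_iff]
      push_cast at hγ
      constructor <;> linarith [hγ.1, hγ.2]
    rw [hfloor]
end

section
/- For every idele x in 𝔸_ℚ^×, the group of units of the adele ring of ℚ, there exist a unique γ ∈ ℚ^×, a unique real number r > 0, and a unique family (u_p)_p with u_p ∈ ℤ_p^× for every prime p, such that x = γ · ι_∞(r) · ι_f(u), where ι_∞(r) denotes the idele whose component at the archimedean place is r and whose component at every prime is 1, and ι_f(u) denotes the idele whose component at the archimedean place is 1 and whose component at each prime p is u_p. -/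
open IsDedekindDomain

/-!
The component `x_p` of an idele `x = (x_∞, (x_p)_p)` has valuation `exp n_p`, with `n_p = 0` for
almost all `p`. Since `ℤ` is a principal ideal domain, `±∏ p^(-n_p) ∈ ℚ^×` has the same
valuations as the `x_p`, and its sign can be chosen to be that of `x_∞`; this fixes `γ`, and then
`r = x_∞ / γ` and `u = γ⁻¹ (x_p)_p`. Conversely `γ` is determined by these two properties: the
quotient of two such rationals is positive and has valuation one at every prime, so it is a
positive unit of `ℤ`.
-/

open HeightOneSpectrum WithZero

namespace IsDedekindDomain.HeightOneSpectrum

variable {R K : Type*} [CommRing R] [IsDedekindDomain R] [Field K] [Algebra R K]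
  [IsFractionRing R K]

theorem exists_units_coe_eq_iff_valued_eq_one {v : HeightOneSpectrum R}
    {t : v.adicCompletion K} :
    (∃ w : (v.adicCompletionIntegers K)ˣ,
      ((w : v.adicCompletionIntegers K) : v.adicCompletion K) = t) ↔ Valued.v t = 1 := by
  constructor
  · rintro ⟨w, rfl⟩
    exact adicCompletionIntegers.isUnit_iff_valued_eq_one.1 w.isUnit
  · intro ht
    obtain ⟨w, hw⟩ := adicCompletionIntegers.isUnit_iff_valued_eq_one
      (a := ⟨t, (mem_adicCompletionIntegers R K v).2 ht.le⟩).2 ht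
    exact ⟨w, congrArg Subtype.val hw⟩

theorem valued_algebraMap_adicCompletion (v : HeightOneSpectrum R) (k : K) :
    Valued.v (algebraMap K (v.adicCompletion K) k) = v.valuation K k := by
  rw [algebraMap_adicCompletion]
  exact valuedAdicCompletion_eq_valuation' v k

theorem exists_units_algebraMap_eq_of_valuation_eq_one {k : K} (hk : k ≠ 0)
    (h : ∀ v : HeightOneSpectrum R, v.valuation K k = 1) :
    ∃ u : Rˣ, algebraMap R K u = k := by
  obtain ⟨a, ha⟩ := mem_integers_of_valuation_le_one K k fun v => (h v).le
  obtain ⟨b, hb⟩ := mem_integers_of_valuation_le_one K k⁻¹ fun v => by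
    rw [map_inv₀, h v, inv_one]
  have hab : a * b = 1 := IsFractionRing.injective R K <| by
    rw [map_mul, ha, hb, map_one, mul_inv_cancel₀ hk]
  exact ⟨⟨a, b, hab, mul_comm b a ▸ hab⟩, ha⟩

section IsPrincipalIdealRing

variable [IsPrincipalIdealRing R]

theorem exists_valuation_eq_exp_neg_one_and_eq_one (v : HeightOneSpectrum R) :
    ∃ π : R, v.valuation K (algebraMap R K π) = exp (-1) ∧
      ∀ w ≠ v, w.valuation K (algebraMap R K π) = 1 := by
  obtain ⟨π, hπ⟩ := (IsPrincipalIdealRing.principal v.asIdeal).principal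
  have hπ0 : π ≠ 0 := by rintro rfl; exact v.ne_bot (by simpa using hπ)
  refine ⟨π, by rw [valuation_of_algebraMap, intValuation_singleton v hπ0 hπ], fun w hwv => ?_⟩
  rw [valuation_eq_one_iff_notMem]
  intro hπw
  have hle : v.asIdeal ≤ w.asIdeal := by rw [hπ, Ideal.span_singleton_le_iff_mem]; exact hπw
  exact hwv (HeightOneSpectrum.ext (v.isMaximal.eq_of_le w.isPrime.ne_top hle).symm)

theorem exists_ne_zero_valuation_eq_exp {n : HeightOneSpectrum R → ℤ} (hn : n.support.Finite) :
    ∃ k : K, k ≠ 0 ∧ ∀ v, v.valuation K k = exp (n v) := by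
  choose π hπv hπw using exists_valuation_eq_exp_neg_one_and_eq_one (R := R) (K := K)
  have hπ0 : ∀ v, algebraMap R K (π v) ≠ 0 := fun v h => exp_ne_zero (by rw [← hπv v, h, map_zero])
  refine ⟨∏ v ∈ hn.toFinset, algebraMap R K (π v) ^ (-n v),
    Finset.prod_ne_zero_iff.2 fun v _ => zpow_ne_zero _ (hπ0 v), fun w => ?_⟩
  have hw_ne : ∀ v ≠ w, w.valuation K (algebraMap R K (π v) ^ (-n v)) = 1 := fun v hvw => by
    rw [map_zpow₀, hπw v w hvw.symm, one_zpow]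
  rw [map_prod, Finset.prod_eq_single w (fun v _ => hw_ne v) fun hw => by
    rw [Set.Finite.mem_toFinset, Function.notMem_support] at hw
    rw [hw, neg_zero, zpow_zero, map_one], map_zpow₀, hπv, ← exp_zsmul, smul_eq_mul, neg_mul_neg,
    mul_one]

end IsPrincipalIdealRing

end IsDedekindDomain.HeightOneSpectrum

theorem IsDedekindDomain.FiniteAdeleRing.exists_ne_zero_valuation_eq_valued_of_isUnit
    {R K : Type*} [CommRing R] [IsDedekindDomain R] [IsPrincipalIdealRing R] [Field K]
    [Algebra R K] [IsFractionRing R K] {a : FiniteAdeleRing R K} (ha : IsUnit a) :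
    ∃ k : K, k ≠ 0 ∧ ∀ v, v.valuation K k = Valued.v (a v) := by
  obtain ⟨ha0, ha1⟩ := FiniteAdeleRing.isUnit_iff.1 ha
  have hv0 : ∀ v, Valued.v (a v) ≠ 0 := fun v => (Valuation.ne_zero_iff _).2 (ha0 v)
  have hsupp : (fun v => log (Valued.v (a v))).support.Finite :=
    ha1.mono fun v hv => by simp only [hv, log_one]
  obtain ⟨k, hk0, hk⟩ := exists_ne_zero_valuation_eq_exp (K := K) hsupp
  exact ⟨k, hk0, fun v => by rw [hk, exp_log (hv0 v)]⟩

theorem Rat.eq_one_of_pos_of_valuation_eq_one {q : ℚ} (hq : 0 < q)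
    (h : ∀ v : HeightOneSpectrum ℤ, v.valuation ℚ q = 1) : q = 1 := by
  obtain ⟨u, hu⟩ := exists_units_algebraMap_eq_of_valuation_eq_one hq.ne' h
  rcases Int.units_eq_one_or u with rfl | rfl
  · simpa using hu.symm
  · simp only [Units.val_neg, Units.val_one, map_neg, map_one] at hu
    linarith

theorem Rat.eq_of_pos_div_of_valuation_eq {q₁ q₂ : ℚ} (hq : 0 < q₁ / q₂)
    (h : ∀ v : HeightOneSpectrum ℤ, v.valuation ℚ q₁ = v.valuation ℚ q₂) : q₁ = q₂ := by
  have hq₂ : q₂ ≠ 0 := by rintro rfl; simp at hq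
  refine (div_eq_one_iff_eq hq₂).1 (Rat.eq_one_of_pos_of_valuation_eq_one hq fun v => ?_)
  rw [map_div₀, h, div_self ((Valuation.ne_zero_iff _).2 hq₂)]

/-- The two properties that characterise the factor `γ ∈ ℚ^×` of a decomposition of `x`. -/
def IsRatComponent (x : ℝ × FiniteAdeleRing ℤ ℚ) (γ : ℚ) : Prop :=
  0 < x.1 / γ ∧ ∀ v : HeightOneSpectrum ℤ, v.valuation ℚ γ = Valued.v (x.2 v)

namespace IsRatComponent

variable {x : ℝ × FiniteAdeleRing ℤ ℚ} {γ : ℚ}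

theorem ne_zero (h : IsRatComponent x γ) : γ ≠ 0 := by
  rintro rfl
  simpa using h.1

theorem unique {γ' : ℚ} (h : IsRatComponent x γ) (h' : IsRatComponent x γ') : γ = γ' := by
  have hx : x.1 ≠ 0 := fun hx => by simpa [hx] using h.1
  have hpos : (0 : ℝ) < ((γ / γ' : ℚ) : ℝ) := by
    have := div_pos h'.1 h.1
    rwa [div_div_div_cancel_left' _ _ hx, ← Rat.cast_div] at this
  exact Rat.eq_of_pos_div_of_valuation_eq (Rat.cast_pos.1 hpos) fun v => (h.2 v).trans (h'.2 v).symm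

end IsRatComponent

theorem exists_isRatComponent (x : (ℝ × FiniteAdeleRing ℤ ℚ)ˣ) :
    ∃ γ : ℚ, IsRatComponent x γ := by
  have hx₁ : (x : ℝ × FiniteAdeleRing ℤ ℚ).1 ≠ 0 := (x.isUnit.map (RingHom.fst ℝ _)).ne_zero
  obtain ⟨k, hk0, hk⟩ := FiniteAdeleRing.exists_ne_zero_valuation_eq_valued_of_isUnit
    (x.isUnit.map (RingHom.snd ℝ (FiniteAdeleRing ℤ ℚ)))
  by_cases hpos : 0 < (x : ℝ × FiniteAdeleRing ℤ ℚ).1 / k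
  · exact ⟨k, hpos, hk⟩
  · refine ⟨-k, ?_, fun v => by rw [Valuation.map_neg, hk]; rfl⟩
    have hne : (x : ℝ × FiniteAdeleRing ℤ ℚ).1 / k ≠ 0 := div_ne_zero hx₁ (by exact_mod_cast hk0)
    rw [Rat.cast_neg, div_neg, neg_pos]
    exact lt_of_le_of_ne (not_lt.1 hpos) hne

theorem eq_mul_mul_iff_isRatComponent (x : ℝ × FiniteAdeleRing ℤ ℚ) {γ : ℚ} (hγ : γ ≠ 0) (r : ℝ)
    (u : FiniteAdeleRing ℤ ℚ) :
    (0 < r ∧ (∀ v : HeightOneSpectrum ℤ, ∃ w : (v.adicCompletionIntegers ℚ)ˣ,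
        ((w : v.adicCompletionIntegers ℚ) : v.adicCompletion ℚ) = u v) ∧
      x = ((γ : ℝ), algebraMap ℚ (FiniteAdeleRing ℤ ℚ) γ) * (r, 1) * (1, u)) ↔
    IsRatComponent x γ ∧ r = x.1 / γ ∧ u = algebraMap ℚ (FiniteAdeleRing ℤ ℚ) γ⁻¹ * x.2 := by
  have hγℝ : (γ : ℝ) ≠ 0 := Rat.cast_ne_zero.2 hγ
  have hx : x = ((γ : ℝ), algebraMap ℚ (FiniteAdeleRing ℤ ℚ) γ) * (r, 1) * (1, u) ↔
      r = x.1 / γ ∧ u = algebraMap ℚ (FiniteAdeleRing ℤ ℚ) γ⁻¹ * x.2 := by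
    simp only [Prod.ext_iff, Prod.fst_mul, Prod.snd_mul, mul_one]
    refine and_congr ?_ ⟨fun h => ?_, ?_⟩
    · rw [eq_div_iff hγℝ]
      constructor <;> intro h <;> linarith
    · rw [h, ← mul_assoc, ← map_mul, inv_mul_cancel₀ hγ, map_one, one_mul]
    · rintro rfl
      rw [← mul_assoc, ← map_mul, mul_inv_cancel₀ hγ, map_one, one_mul]
  have hu : ∀ v : HeightOneSpectrum ℤ,
      Valued.v ((algebraMap ℚ (FiniteAdeleRing ℤ ℚ) γ⁻¹ * x.2) v) = 1 ↔
        v.valuation ℚ γ = Valued.v (x.2 v) := fun v => by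
    rw [show (algebraMap ℚ (FiniteAdeleRing ℤ ℚ) γ⁻¹ * x.2) v =
        algebraMap ℚ (v.adicCompletion ℚ) γ⁻¹ * x.2 v from rfl, map_mul,
      valued_algebraMap_adicCompletion, map_inv₀, inv_mul_eq_one₀ ((Valuation.ne_zero_iff _).2 hγ)]
  simp only [exists_units_coe_eq_iff_valued_eq_one, hx]
  constructor
  · rintro ⟨hr, hu', rfl, rfl⟩
    exact ⟨⟨hr, fun v => (hu v).1 (hu' v)⟩, rfl, rfl⟩
  · rintro ⟨⟨hr, hv⟩, rfl, rfl⟩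
    exact ⟨hr, fun v => (hu v).2 (hv v), rfl, rfl⟩

/-- For every idele `x ∈ 𝔸_ℚ^×` (units of the adele ring
`ℝ × 𝔸_{ℚ,f}`) there exist a unique `γ ∈ ℚ^×`, a unique real `r > 0`, and a
unique family `u = (u_v)` of local units (an element of the finite adele ring
each of whose components is a unit of the local ring of integers) with
`x = γ · ι_∞(r) · ι_f(u)`, where `ι_∞(r) = (r, 1)` and `ι_f(u) = (1, u)`. -/
theorem idele_decomposition (x : (ℝ × FiniteAdeleRing ℤ ℚ)ˣ) :
    ∃! gru : ℚˣ × ℝ × FiniteAdeleRing ℤ ℚ,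
      0 < gru.2.1 ∧
      (∀ v : HeightOneSpectrum ℤ,
        ∃ w : (v.adicCompletionIntegers ℚ)ˣ,
          ((w : v.adicCompletionIntegers ℚ) : v.adicCompletion ℚ) = gru.2.2 v) ∧
      (x : ℝ × FiniteAdeleRing ℤ ℚ) =
        (((gru.1 : ℚ) : ℝ), algebraMap ℚ (FiniteAdeleRing ℤ ℚ) (gru.1 : ℚ)) *
          (gru.2.1, 1) * (1, gru.2.2) := by
  obtain ⟨γ, hγ⟩ := exists_isRatComponent x
  refine ⟨(Units.mk0 γ hγ.ne_zero, _, _),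
    (eq_mul_mul_iff_isRatComponent x hγ.ne_zero _ _).2 ⟨hγ, rfl, rfl⟩, ?_⟩
  rintro ⟨γ', r, u⟩ h
  obtain ⟨hγ', rfl, rfl⟩ := (eq_mul_mul_iff_isRatComponent x γ'.ne_zero r u).1 h
  obtain rfl : γ = γ' := hγ.unique hγ'
  rw [Units.mk0_val]
end
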